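/- arXiv:1303.4336 — 6 statements merged into one kernel-verified Lean document; each statement's English description precedes it below -/
import Mathlib

section
/- For every positive integer n, the Boolean lattice of all subsets of {1,...,n} can be partitioned into exactly C(n, floor(n/2)) chains, each of which is symmetric: a chain containing sets of every size from k to n-k for some k ≤ n/2, with exactly one set of each such size. -/
/-!
Induction on the ground set. Given a symmetric chain decomposition of the power set of `S` and
a new point `a`, each chain `X₁ ⊂ ⋯ ⊂ Xₘ` splits into the two chains
`X₁ ⊂ ⋯ ⊂ Xₘ ⊂ Xₘ ∪ {a}` and `X₁ ∪ {a} ⊂ ⋯ ⊂ Xₘ₋₁ ∪ {a}` (the second one possibly empty).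
If the sizes in the old chain run from `k` to `|S| - k`, those in the new ones run from `k` to
`|S| + 1 - k` and from `k + 1` to `|S| - k`, so both are symmetric in the power set of `S ∪ {a}`;
and a set `A` lies in a child of the unique old chain containing `A \ {a}`, and in no other.
A symmetric chain of `2^[n]` meets level `⌊n/2⌋` exactly once, which counts the chains.
-/

open Finset

lemma IsChain.supClosed {β : Type*} [SemilatticeSup β] {s : Set β}
    (hs : IsChain (· ≤ ·) s) : SupClosed s := by
  intro x hx y hy
  rcases eq_or_ne x y with rfl | hxy
  · rwa [sup_idem]
  · rcases hs hx hy hxy with h | h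
    · rwa [sup_of_le_right h]
    · rwa [sup_of_le_left h]

lemma IsChain.finsetSup_id_mem {β : Type*} [SemilatticeSup β] [OrderBot β] {C : Finset β}
    (hC : IsChain (· ≤ ·) (C : Set β)) (hne : C.Nonempty) : C.sup id ∈ C := by
  have := hC.supClosed.finsetSup'_mem hne (f := id) fun _ h => h
  rwa [sup'_eq_sup] at this

section SymmetricChains

variable {α : Type*}

lemma IsChain.injOn_card {C : Set (Finset α)} (hC : IsChain (· ⊆ ·) C) : C.InjOn card := by
  intro X hX Y hY h
  by_contra hne
  rcases hC hX hY hne with hs | hs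
  · exact hne (eq_of_subset_of_card_le hs h.ge)
  · exact hne (eq_of_subset_of_card_le hs h.le).symm

structure IsSymmetricChain (S : Finset α) (C : Finset (Finset α)) : Prop where
  subset : ∀ X ∈ C, X ⊆ S
  isChain : IsChain (· ⊆ ·) (C : Set (Finset α))
  image_card : ∃ k ≤ #S / 2, C.image card = Icc k (#S - k)

structure IsSymmetricChainDecomposition (S : Finset α) (𝒞 : Finset (Finset (Finset α))) :
    Prop where
  existsUnique_mem : ∀ A ⊆ S, ∃! C, C ∈ 𝒞 ∧ A ∈ C
  isSymmetricChain : ∀ C ∈ 𝒞, IsSymmetricChain S C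

namespace IsSymmetricChain

variable {S : Finset α} {C : Finset (Finset α)} {a : α}

lemma nonempty (hC : IsSymmetricChain S C) : C.Nonempty := by
  obtain ⟨k, hk, himg⟩ := hC.image_card
  exact image_nonempty.1 (himg ▸ nonempty_Icc.2 (by omega) : (C.image card).Nonempty)

lemma notMem_of_mem (hC : IsSymmetricChain S C) (ha : a ∉ S) {X : Finset α} (hX : X ∈ C) :
    a ∉ X :=
  fun h => ha (hC.subset X hX h)

end IsSymmetricChain

namespace IsSymmetricChainDecomposition

variable {S : Finset α} {𝒞 : Finset (Finset (Finset α))}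

lemma card_eq (h : IsSymmetricChainDecomposition S 𝒞) : #𝒞 = (#S).choose (#S / 2) := by
  have hmid : ∀ C ∈ 𝒞, ∃ A ∈ C, #A = #S / 2 := by
    intro C hC
    obtain ⟨k, hk, himg⟩ := (h.isSymmetricChain C hC).image_card
    exact mem_image.1 (himg ▸ mem_Icc.2 ⟨hk, by omega⟩ : #S / 2 ∈ C.image card)
  choose mid hmid_mem hmid_card using hmid
  rw [← card_powersetCard]
  refine card_bij mid (fun C hC => mem_powersetCard.2
    ⟨(h.isSymmetricChain C hC).subset _ (hmid_mem C hC), hmid_card C hC⟩) ?_ ?_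
  · intro C₁ h₁ C₂ h₂ heq
    have hS := (h.isSymmetricChain C₁ h₁).subset _ (hmid_mem C₁ h₁)
    exact (h.existsUnique_mem _ hS).unique ⟨h₁, hmid_mem C₁ h₁⟩ ⟨h₂, heq ▸ hmid_mem C₂ h₂⟩
  · intro A hA
    obtain ⟨hAS, hAcard⟩ := mem_powersetCard.1 hA
    obtain ⟨C, ⟨hC, hAC⟩, -⟩ := h.existsUnique_mem A hAS
    exact ⟨C, hC, (h.isSymmetricChain C hC).isChain.injOn_card (hmid_mem C hC) hAC
      ((hmid_card C hC).trans hAcard.symm)⟩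

end IsSymmetricChainDecomposition

variable [DecidableEq α]

section Chain

variable {C : Finset (Finset α)} {k m : ℕ}

lemma card_sup_id_of_image_card_eq_Icc (hC : IsChain (· ⊆ ·) (C : Set (Finset α)))
    (himg : C.image card = Icc k m) (hkm : k ≤ m) : #(C.sup id) = m := by
  have hne : C.Nonempty := image_nonempty.1 (himg ▸ nonempty_Icc.2 hkm : (C.image card).Nonempty)
  have htop : #(C.sup id) ∈ Icc k m := himg ▸ mem_image_of_mem _ (hC.finsetSup_id_mem hne)
  obtain ⟨X, hX, hXm⟩ := mem_image.1 (himg ▸ right_mem_Icc.2 hkm : m ∈ C.image card)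
  exact le_antisymm (mem_Icc.1 htop).2 (hXm ▸ card_le_card (le_sup (f := id) hX))

lemma image_card_erase_sup_id (hC : IsChain (· ⊆ ·) (C : Set (Finset α)))
    (himg : C.image card = Icc k m) (hkm : k ≤ m) :
    (C.erase (C.sup id)).image card = Ico k m := by
  have htop := card_sup_id_of_image_card_eq_Icc hC himg hkm
  ext i
  simp only [mem_image, mem_erase]
  constructor
  · rintro ⟨X, ⟨hXtop, hX⟩, rfl⟩
    have hXi : #X ∈ Icc k m := himg ▸ mem_image_of_mem _ hX
    have hXm : #X ≠ m := fun h => hXtop <|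
      hC.injOn_card hX (hC.finsetSup_id_mem ⟨X, hX⟩) (h.trans htop.symm)
    exact mem_Ico.2 ⟨(mem_Icc.1 hXi).1, lt_of_le_of_ne (mem_Icc.1 hXi).2 hXm⟩
  · intro hi
    obtain ⟨X, hX, rfl⟩ := mem_image.1
      (himg ▸ mem_Icc.2 ⟨(mem_Ico.1 hi).1, (mem_Ico.1 hi).2.le⟩ : i ∈ C.image card)
    exact ⟨X, ⟨fun h => (mem_Ico.1 hi).2.ne (h ▸ htop), hX⟩, rfl⟩

end Chain

def extendChain (a : α) (C : Finset (Finset α)) : Finset (Finset α) :=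
  insert (insert a (C.sup id)) C

def shiftChain (a : α) (C : Finset (Finset α)) : Finset (Finset α) :=
  (C.erase (C.sup id)).image (insert a)

def childChains (a : α) (C : Finset (Finset α)) : Finset (Finset (Finset α)) :=
  {extendChain a C, shiftChain a C}

lemma exists_mem_childChains_of_erase_mem {a : α} {C : Finset (Finset α)} {A : Finset α}
    (hA : A.erase a ∈ C) :
    ∃ D ∈ childChains a C, A ∈ D := by
  by_cases haA : a ∈ A
  · rw [← insert_erase haA]
    by_cases htop : A.erase a = C.sup id
    · exact ⟨_, mem_insert_self _ _, htop ▸ mem_insert_self _ _⟩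
    · exact ⟨_, mem_insert_of_mem (mem_singleton_self _),
        mem_image_of_mem _ (mem_erase.2 ⟨htop, hA⟩)⟩
  · rw [erase_eq_of_notMem haA] at hA
    exact ⟨_, mem_insert_self _ _, mem_insert_of_mem hA⟩

namespace IsSymmetricChain

variable {S : Finset α} {C D : Finset (Finset α)} {a : α}

lemma sup_id_mem (hC : IsSymmetricChain S C) : C.sup id ∈ C :=
  hC.isChain.finsetSup_id_mem hC.nonempty

lemma notMem_sup_id (hC : IsSymmetricChain S C) (ha : a ∉ S) : a ∉ C.sup id :=
  hC.notMem_of_mem ha hC.sup_id_mem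

lemma extendChain (hC : IsSymmetricChain S C) (ha : a ∉ S) :
    IsSymmetricChain (insert a S) (_root_.extendChain a C) := by
  obtain ⟨k, hk, himg⟩ := hC.image_card
  have htop := card_sup_id_of_image_card_eq_Icc hC.isChain himg (by omega)
  refine ⟨?_, ?_, k, ?_, ?_⟩
  · intro X hX
    rcases mem_insert.1 hX with rfl | hX
    · exact insert_subset_insert a (Finset.sup_le hC.subset)
    · exact (hC.subset X hX).trans (subset_insert a S)
  · rw [_root_.extendChain, coe_insert]
    exact hC.isChain.insert fun X hX _ =>
      Or.inr ((le_sup (f := id) hX).trans (subset_insert a _))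
  · rw [card_insert_of_notMem ha]
    omega
  · rw [_root_.extendChain, image_insert, himg, card_insert_of_notMem (hC.notMem_sup_id ha),
      htop, insert_Icc_right_eq_Icc_add_one (by omega), card_insert_of_notMem ha]
    congr 1
    omega

lemma shiftChain (hC : IsSymmetricChain S C) (ha : a ∉ S)
    (hne : (_root_.shiftChain a C).Nonempty) :
    IsSymmetricChain (insert a S) (_root_.shiftChain a C) := by
  obtain ⟨k, hk, himg⟩ := hC.image_card
  have hlower := image_card_erase_sup_id hC.isChain himg (by omega)
  have himg' : (_root_.shiftChain a C).image card = Icc (k + 1) (#S - k) := by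
    have hcard : ∀ X ∈ C.erase (C.sup id), #(insert a X) = #X + 1 := fun X hX =>
      card_insert_of_notMem (hC.notMem_of_mem ha (mem_of_mem_erase hX))
    rw [_root_.shiftChain, image_image,
      image_congr (f := card ∘ insert a) (g := (· + 1) ∘ card) hcard, ← image_image, hlower, image_add_right_Ico, Ico_add_one_right_eq_Icc]
  have hlt : k + 1 ≤ #S - k := nonempty_Icc.1 (himg' ▸ hne.image card)
  refine ⟨?_, ?_, k + 1, ?_, ?_⟩
  · intro X hX
    obtain ⟨Y, hY, rfl⟩ := mem_image.1 hX
    exact insert_subset_insert a (hC.subset Y (mem_of_mem_erase hY))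
  · rw [_root_.shiftChain, coe_image]
    exact (hC.isChain.mono (coe_subset.2 (erase_subset _ _))).image_of_map_rel
      (fun X Y : Finset α => X ⊆ Y) (· ⊆ ·) (insert a) fun _ _ => insert_subset_insert a
  · rw [card_insert_of_notMem ha]
    omega
  · rw [himg', card_insert_of_notMem ha]
    congr 1
    omega

lemma of_mem_childChains (hC : IsSymmetricChain S C) (ha : a ∉ S) (hD : D ∈ childChains a C)
    (hne : D.Nonempty) : IsSymmetricChain (insert a S) D := by
  rcases mem_insert.1 hD with rfl | hD
  · exact hC.extendChain ha
  · rw [mem_singleton.1 hD] at hne ⊢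
    exact hC.shiftChain ha hne

lemma erase_mem_of_mem_childChains (hC : IsSymmetricChain S C) (ha : a ∉ S)
    (hD : D ∈ childChains a C) {A : Finset α} (hA : A ∈ D) : A.erase a ∈ C := by
  rcases mem_insert.1 hD with rfl | hD
  · rcases mem_insert.1 hA with rfl | hA
    · rw [erase_insert (hC.notMem_sup_id ha)]
      exact hC.sup_id_mem
    · rwa [erase_eq_of_notMem (hC.notMem_of_mem ha hA)]
  · rw [mem_singleton.1 hD] at hA
    obtain ⟨B, hB, rfl⟩ := mem_image.1 hA
    rw [erase_insert (hC.notMem_of_mem ha (mem_of_mem_erase hB))]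
    exact mem_of_mem_erase hB

lemma disjoint_extendChain_shiftChain (hC : IsSymmetricChain S C) (ha : a ∉ S) :
    Disjoint (_root_.extendChain a C) (_root_.shiftChain a C) := by
  rw [disjoint_left]
  intro A hext hshift
  obtain ⟨B, hB, rfl⟩ := mem_image.1 hshift
  have haB := hC.notMem_of_mem ha (mem_of_mem_erase hB)
  rcases mem_insert.1 hext with h | h
  · have := congrArg (erase · a) h
    simp only [erase_insert haB, erase_insert (hC.notMem_sup_id ha)] at this
    exact (mem_erase.1 hB).1 this
  · exact hC.notMem_of_mem ha h (mem_insert_self a B)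

lemma eq_of_mem_childChains (hC : IsSymmetricChain S C) (ha : a ∉ S) {D' : Finset (Finset α)}
    (hD : D ∈ childChains a C) (hD' : D' ∈ childChains a C) {A : Finset α} (hA : A ∈ D)
    (hA' : A ∈ D') : D = D' := by
  have hdisj := disjoint_left.1 (hC.disjoint_extendChain_shiftChain ha)
  simp only [childChains, mem_insert, mem_singleton] at hD hD'
  rcases hD with rfl | rfl <;> rcases hD' with rfl | rfl
  · rfl
  · exact (hdisj hA hA').elim
  · exact (hdisj hA' hA).elim
  · rfl

end IsSymmetricChain

namespace IsSymmetricChainDecomposition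

variable {S : Finset α} {𝒞 : Finset (Finset (Finset α))}

lemma insert (h : IsSymmetricChainDecomposition S 𝒞) {a : α} (ha : a ∉ S) :
    IsSymmetricChainDecomposition (insert a S)
      ((𝒞.biUnion (childChains a)).filter Finset.Nonempty) := by
  have mem_iff : ∀ {D}, D ∈ (𝒞.biUnion (childChains a)).filter Finset.Nonempty ↔
      (∃ C ∈ 𝒞, D ∈ childChains a C) ∧ D.Nonempty := by
    simp only [mem_filter, mem_biUnion, implies_true]
  refine ⟨fun A hA => ?_, fun D hD => ?_⟩
  · obtain ⟨C, ⟨hC, hAC⟩, huniq⟩ := h.existsUnique_mem (A.erase a) (subset_insert_iff.1 hA)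
    have hCs := h.isSymmetricChain C hC
    obtain ⟨D, hD, hAD⟩ := exists_mem_childChains_of_erase_mem hAC
    refine ⟨D, ⟨mem_iff.2 ⟨⟨C, hC, hD⟩, A, hAD⟩, hAD⟩, ?_⟩
    rintro D' ⟨hD', hAD'⟩
    obtain ⟨⟨C', hC', hD'C'⟩, -⟩ := mem_iff.1 hD'
    obtain rfl : C' = C := huniq C'
      ⟨hC', (h.isSymmetricChain C' hC').erase_mem_of_mem_childChains ha hD'C' hAD'⟩
    exact hCs.eq_of_mem_childChains ha hD'C' hD hAD' hAD
  · obtain ⟨⟨C, hC, hDC⟩, hne⟩ := mem_iff.1 hD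
    exact (h.isSymmetricChain C hC).of_mem_childChains ha hDC hne

end IsSymmetricChainDecomposition

theorem exists_isSymmetricChainDecomposition (S : Finset α) :
    ∃ 𝒞, IsSymmetricChainDecomposition S 𝒞 := by
  induction S using Finset.induction_on with
  | empty =>
    refine ⟨{{∅}}, ⟨fun A hA => ?_, ?_⟩⟩
    · rw [subset_empty.1 hA]
      exact ⟨{∅}, by simp, fun C hC => mem_singleton.1 hC.1⟩
    · simp only [mem_singleton, forall_eq]
      exact ⟨by simp, by simp, 0, by simp, by simp⟩
  | insert a S ha ih =>
    obtain ⟨𝒞, h⟩ := ih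
    exact ⟨_, h.insert ha⟩

end SymmetricChains

theorem scd_exists_general (n : ℕ) :
    ∃ 𝒞 : Finset (Finset (Finset (Fin n))),
      (∀ A : Finset (Fin n), ∃! C, C ∈ 𝒞 ∧ A ∈ C) ∧
      𝒞.card = n.choose (n / 2) ∧
      ∀ C ∈ 𝒞, IsChain (· ⊆ ·) (C : Set (Finset (Fin n))) ∧
        ∃ k, k ≤ n / 2 ∧ C.image Finset.card = Finset.Icc k (n - k) := by
  obtain ⟨𝒞, h⟩ := exists_isSymmetricChainDecomposition (univ : Finset (Fin n))
  refine ⟨𝒞, fun A => h.existsUnique_mem A (subset_univ A), ?_, fun C hC => ?_⟩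
  · simpa using h.card_eq
  · obtain ⟨-, hchain, k, hk, himg⟩ := h.isSymmetricChain C hC
    rw [card_fin] at hk himg
    exact ⟨hchain, k, hk, himg⟩

/-- Theorem of de Bruijn, van Ebbenhorst Tengbergen, and Kruyswijk (1951):
the Boolean lattice has a symmetric chain decomposition into C(n, ⌊n/2⌋) chains. -/
theorem scd_exists (n : ℕ) (hn : 1 ≤ n) :
    ∃ 𝒞 : Finset (Finset (Finset (Fin n))),
      (∀ A : Finset (Fin n), ∃! C, C ∈ 𝒞 ∧ A ∈ C) ∧
      𝒞.card = n.choose (n / 2) ∧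
      ∀ C ∈ 𝒞, IsChain (· ⊆ ·) (C : Set (Finset (Fin n))) ∧
        ∃ k, k ≤ n / 2 ∧ C.image Finset.card = Finset.Icc k (n - k) :=
  scd_exists_general n
end

section
/- If F is a family of subsets of {1,...,n} containing no two sets A, B with A a proper subset of B, then |F| ≤ C(n, floor(n/2)). -/
/-- Sperner's Theorem (1928). -/
theorem sperner_theorem (n : ℕ) (F : Finset (Finset (Fin n)))
    (h : ∀ A ∈ F, ∀ B ∈ F, ¬ A ⊂ B) :
    F.card ≤ n.choose (n / 2) := by
  have hF : IsAntichain (· ⊆ ·) (F : Set (Finset (Fin n))) :=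
    fun A hA B hB hne hAB => h A hA B hB (hAB.ssubset_of_ne hne)
  simpa using hF.sperner
end

section
/- If F is a family of subsets of {1,...,n} containing no chain A_1 ⊊ A_2 ⊊ ... ⊊ A_k of k distinct sets, then |F| ≤ Σ(n,k-1), the sum of the k-1 largest binomial coefficients C(n,i). -/
def middleSum (n m : ℕ) : ℕ := ∑ i ∈ Finset.range m, n.choose ((n - m + 1) / 2 + i)

/-!
Peel off the maximal elements of the family: they form an antichain, and if the family has no
`k`-chain then what remains has no `(k - 1)`-chain. Applying the LYM inequality to each of the
`k - 1` antichains obtained this way gives `∑_{A ∈ F} 1 / C(n, |A|) ≤ k - 1`. Under this weighted constraint, and with each layer `F_r`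
holding at most `C(n, r)` sets, `|F|` is largest when the `k - 1` largest layers are filled
completely: moving weight from a layer outside the middle window to one inside never loses size.
-/

open Finset

namespace Nat

theorem choose_le_choose_of_le_of_le_half {n a b : ℕ} (hab : a ≤ b) (hb : b ≤ n / 2) :
    n.choose a ≤ n.choose b := by
  induction b, hab using Nat.le_induction with
  | base => rfl
  | succ b _ ih => exact (ih (by omega)).trans (choose_le_succ_of_lt_half_left (by omega))

theorem choose_eq_choose_min {n a : ℕ} (ha : a ≤ n) : n.choose a = n.choose (min a (n - a)) := by
  rcases le_total a (n - a) with h | h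
  · rw [min_eq_left h]
  · rw [min_eq_right h, choose_symm ha]

theorem choose_le_choose_of_min_le {n a b : ℕ} (hb : b ≤ n)
    (h : min a (n - a) ≤ min b (n - b)) : n.choose a ≤ n.choose b := by
  rcases le_or_gt a n with ha | ha
  · rw [choose_eq_choose_min ha, choose_eq_choose_min hb]
    exact choose_le_choose_of_le_of_le_half h (by omega)
  · simp [choose_eq_zero_of_lt ha]

end Nat

section Chains

variable {α : Type*} [Preorder α]

def HasStrictChain (P : α → Prop) (k : ℕ) : Prop :=
  ∃ A : Fin k → α, (∀ i, P (A i)) ∧ StrictMono A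

theorem HasStrictChain.of_not_maximal {P : α → Prop} {m : ℕ}
    (h : HasStrictChain (fun a => P a ∧ ¬ Maximal P a) (m + 1)) : HasStrictChain P (m + 2) := by
  obtain ⟨A, hA, hmono⟩ := h
  obtain ⟨b, hlt, hb⟩ := exists_gt_of_not_maximal (hA (Fin.last m)).1 (hA (Fin.last m)).2
  refine ⟨Fin.snoc A b, fun i => ?_, Fin.strictMono_iff_lt_succ.2 fun i => ?_⟩
  · refine Fin.lastCases ?_ (fun j => ?_) i
    · simpa using hb
    · simpa using (hA j).1
  · refine Fin.lastCases ?_ (fun j => ?_) i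
    · simpa using hlt
    · rw [Fin.succ_castSucc, Fin.snoc_castSucc, Fin.snoc_castSucc]
      exact hmono Fin.castSucc_lt_succ

end Chains

section LYM

variable {𝕜 α : Type*} [Semifield 𝕜] [Fintype α]

theorem Finset.sum_inv_choose_eq_sum_card_slice_div (𝒜 : Finset (Finset α)) :
    ∑ s ∈ 𝒜, ((Fintype.card α).choose #s : 𝕜)⁻¹ =
      ∑ r ∈ range (Fintype.card α + 1), (#(𝒜 # r) / (Fintype.card α).choose r : 𝕜) := by
  calc
    _ = ∑ r ∈ range (Fintype.card α + 1),
        ∑ s ∈ 𝒜 with #s = r, ((Fintype.card α).choose r : 𝕜)⁻¹ := by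
      rw [sum_fiberwise_of_maps_to']; simp [card_le_univ]
    _ = _ := by simp [slice, div_eq_mul_inv]

variable [LinearOrder 𝕜] [IsStrictOrderedRing 𝕜]

theorem Finset.sum_inv_choose_le_of_not_hasStrictChain {m : ℕ} {𝒜 : Finset (Finset α)}
    (h : ¬ HasStrictChain (· ∈ 𝒜) (m + 1)) :
    ∑ s ∈ 𝒜, ((Fintype.card α).choose #s : 𝕜)⁻¹ ≤ m := by
  classical
  induction m generalizing 𝒜 with
  | zero =>
    obtain rfl : 𝒜 = ∅ := eq_empty_of_forall_notMem fun s hs =>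
      h ⟨fun _ => s, fun _ => hs, fun i j hij => absurd hij (by omega)⟩
    simp
  | succ m ih =>
    have hmax : IsAntichain (· ⊆ ·) (SetLike.coe {s ∈ 𝒜 | Maximal (· ∈ 𝒜) s}) :=
      (setOfPred_maximal_antichain _).subset fun s hs => (mem_filter.1 hs).2
    have hrest : ¬ HasStrictChain (· ∈ {s ∈ 𝒜 | ¬ Maximal (· ∈ 𝒜) s}) (m + 1) := by
      simp only [mem_filter]
      exact fun hc => h hc.of_not_maximal
    rw [← sum_filter_add_sum_filter_not 𝒜 (Maximal (· ∈ 𝒜)), Nat.cast_succ, add_comm (m : 𝕜)]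
    exact add_le_add (lubell_yamamoto_meshalkin_inequality_sum_inv_choose hmax) (ih hrest)

end LYM

-- Fractional knapsack with capacity `#t` and unit caps: the items of `t` carry the largest values.
theorem Finset.sum_mul_le_sum_of_threshold {ι 𝕜 : Type*} [CommRing 𝕜] [LinearOrder 𝕜]
    [IsStrictOrderedRing 𝕜] {s t : Finset ι} (hts : t ⊆ s) {w x : ι → 𝕜} {c : 𝕜} (hc : 0 ≤ c)
    (hin : ∀ i ∈ t, c ≤ w i) (hout : ∀ i ∈ s, i ∉ t → w i ≤ c) (hx₀ : ∀ i ∈ s, 0 ≤ x i)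
    (hx₁ : ∀ i ∈ s, x i ≤ 1) (hsum : ∑ i ∈ s, x i ≤ #t) :
    ∑ i ∈ s, w i * x i ≤ ∑ i ∈ t, w i := by
  classical
  have hfar : ∑ i ∈ s \ t, w i * x i ≤ c * ∑ i ∈ s \ t, x i := by
    rw [mul_sum]
    refine sum_le_sum fun i hi => ?_
    obtain ⟨his, hit⟩ := mem_sdiff.1 hi
    exact mul_le_mul_of_nonneg_right (hout i his hit) (hx₀ i his)
  have hnear : ∑ i ∈ t, w i * x i ≤ ∑ i ∈ t, w i - c * (#t - ∑ i ∈ t, x i) := by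
    have hi : ∀ i ∈ t, w i * x i ≤ w i - c * (1 - x i) := fun i hi => by
      nlinarith [hin i hi, hx₁ i (hts hi)]
    calc ∑ i ∈ t, w i * x i ≤ ∑ i ∈ t, (w i - c * (1 - x i)) := sum_le_sum hi
      _ = _ := by simp [sum_sub_distrib, mul_sum, mul_sub, mul_comm]
  rw [← sum_sdiff hts] at hsum ⊢
  nlinarith

theorem middleSum_eq_sum_Ico (n m : ℕ) :
    middleSum n m = ∑ r ∈ Ico ((n - m + 1) / 2) ((n - m + 1) / 2 + m), n.choose r := by
  rw [middleSum, sum_Ico_eq_sum_range, Nat.add_sub_cancel_left]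

theorem middleSum_of_le {n m : ℕ} (h : n + 1 ≤ m) : middleSum n m = 2 ^ n := by
  have hstart : (n - m + 1) / 2 = 0 := by omega
  rw [middleSum, hstart, ← Nat.sum_range_choose]
  simp only [zero_add]
  exact (sum_subset (range_subset_range.2 h) fun r _ hr =>
    Nat.choose_eq_zero_of_lt (by simpa using hr)).symm

theorem sum_le_middleSum {n m : ℕ} (hm : m ≤ n + 1) (g : ℕ → ℕ) (hg : ∀ r, g r ≤ n.choose r)
    (hsum : ∑ r ∈ range (n + 1), (g r : ℚ) / n.choose r ≤ m) :
    ∑ r ∈ range (n + 1), g r ≤ middleSum n m := by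
  set a := (n - m + 1) / 2
  have hpos : ∀ r ∈ range (n + 1), (0 : ℚ) < n.choose r := fun r hr =>
    Nat.cast_pos.2 (Nat.choose_pos (mem_range_succ_iff.1 hr))
  have hwindow : Ico a (a + m) ⊆ range (n + 1) := fun r hr => by
    simp only [mem_Ico, mem_range] at hr ⊢; omega
  -- `C(n, a)` is the smallest coefficient inside the window and the largest outside it.
  have key := sum_mul_le_sum_of_threshold hwindow (w := fun r => (n.choose r : ℚ))
    (x := fun r => (g r : ℚ) / n.choose r) (c := n.choose a) (by positivity)
    (fun r hr => by
      simp only [mem_Ico] at hr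
      exact_mod_cast Nat.choose_le_choose_of_min_le (by omega) (by omega))
    (fun r hr hr' => by
      simp only [mem_Ico, mem_range] at hr hr'
      exact_mod_cast Nat.choose_le_choose_of_min_le (by omega) (by omega))
    (fun r _ => by positivity)
    (fun r hr => div_le_one_of_le₀ (by exact_mod_cast hg r) (hpos r hr).le)
    (by simpa using hsum)
  rw [sum_congr rfl fun r hr => mul_div_cancel₀ _ (hpos r hr).ne'] at key
  rw [middleSum_eq_sum_Ico]
  exact_mod_cast key

/-- Erdős's theorem (1945): a family with no k-chain has size at most the sum of the
k-1 largest binomial coefficients. -/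
theorem erdos_theorem (n k : ℕ) (F : Finset (Finset (Fin n)))
    (h : ¬ ∃ A : Fin k → Finset (Fin n),
        (∀ i, A i ∈ F) ∧ ∀ i j : Fin k, i < j → A i ⊂ A j) :
    F.card ≤ middleSum n (k - 1) := by
  have hF : ¬ HasStrictChain (· ∈ F) k := fun ⟨A, hA, hmono⟩ => h ⟨A, hA, fun _ _ hij => hmono hij⟩
  obtain _ | m := k
  · exact (hF ⟨Fin.elim0, fun i => i.elim0, fun i => i.elim0⟩).elim
  rw [Nat.add_sub_cancel]
  rcases le_or_gt m (n + 1) with hm | hm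
  · have hLYM := sum_inv_choose_le_of_not_hasStrictChain (𝕜 := ℚ) hF
    rw [sum_inv_choose_eq_sum_card_slice_div, Fintype.card_fin] at hLYM
    rw [← sum_card_slice F, Fintype.card_fin, ← Nat.range_succ_eq_Iic]
    exact sum_le_middleSum hm _ (fun r => by simpa using (sized_slice (𝒜 := F)).card_le) hLYM
  · rw [middleSum_of_le hm.le]
    simpa using F.card_le_univ
end

section
/- If a family F of subsets of {1,...,n} has size |F| = x + C(n, floor(n/2)) with x ≥ 0, then F contains at least x · (floor(n/2) + 1) pairs (A,B) with A ⊊ B. -/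
/-!
Split `2^[n]` into `C(n, ⌊n/2⌋)` chains, each through one middle-level set: between consecutive
levels on either side of the middle there are matchings towards the middle (Hall's theorem plus the
local LYM inequality), and a set is sent to the middle along them. A family with `x` sets more than
there are chains has at least `x` comparable pairs inside common chains. Averaging over all `n!`
relabellings of the ground set, a pair `A ⊊ B` other than `(∅, [n])` lies in a common chain for at
most a `1/(⌊n/2⌋ + 1)` fraction of them. The pair `(∅, [n])` is avoided by removing `[n]` from the
family, which loses the `|F| - 1 ≥ ⌊n/2⌋ + 1` pairs `(A, [n])`.
-/

open Finset
open scoped Nat Pointwise FinsetFamily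

theorem Nat.self_le_choose_of_pos_of_lt {s k : ℕ} (hk : 0 < k) (hks : k < s) :
    s ≤ s.choose k := by
  induction s generalizing k with
  | zero => omega
  | succ s ih =>
    obtain rfl | ⟨k, rfl⟩ : k = 1 ∨ ∃ k', k = k' + 1 + 1 := by
      rcases k with _ | _ | k <;> simp_all
    · simp
    · rw [Nat.choose_succ_succ']
      have := ih (k := k + 1) (by omega) (by omega)
      have := Nat.choose_pos (show k + 1 + 1 ≤ s by omega)
      omega

theorem Nat.factorial_eq_choose_mul_choose_mul {n a b : ℕ} (hab : a ≤ b) (hbn : b ≤ n) :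
    n.choose a * (n - a).choose (b - a) * (a ! * (b - a)! * (n - b)!) = n ! := by
  have h₁ := Nat.choose_mul_factorial_mul_factorial (show b - a ≤ n - a by omega)
  rw [show n - a - (b - a) = n - b by omega] at h₁
  rw [← Nat.choose_mul_factorial_mul_factorial (show a ≤ n by omega), ← h₁]
  ring

section ChainFibers
variable {β γ : Type*} [PartialOrder β]

def HasChainFibers (rep : β → γ) : Prop :=
  ∀ a b, rep a = rep b → a ≤ b ∨ b ≤ a

variable [DecidableEq β] [DecidableLT β]

theorem IsChain.card_le_card_pairs_lt_add_one {T : Finset β}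
    (hT : IsChain (· ≤ ·) (T : Set β)) : #T ≤ #{p ∈ T ×ˢ T | p.1 < p.2} + 1 := by
  obtain rfl | hne := T.eq_empty_or_nonempty
  · simp
  obtain ⟨M, hM⟩ := T.exists_maximal hne
  have hlt : ∀ B ∈ T.erase M, B < M := by
    intro B hB
    obtain ⟨hBM, hBT⟩ := mem_erase.1 hB
    exact (hT.total hBT hM.prop).elim (lt_of_le_of_ne · hBM)
      fun h => (hBM (hM.eq_of_ge hBT h)).elim
  calc #T = #(T.erase M) + 1 := (card_erase_add_one hM.prop).symm
    _ ≤ #{p ∈ T ×ˢ T | p.1 < p.2} + 1 := by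
      gcongr
      refine card_le_card_of_injOn (fun B => (B, M)) (fun B hB => ?_)
        fun B _ C _ h => congrArg Prod.fst h
      simpa [hM.prop, (mem_erase.1 hB).2] using hlt B hB

theorem HasChainFibers.card_le_card_image_add_card_pairs [DecidableEq γ] {rep : β → γ}
    (hrep : HasChainFibers rep) (F : Finset β) :
    #F ≤ #(F.image rep) + #{p ∈ F ×ˢ F | p.1 < p.2 ∧ rep p.1 = rep p.2} := by
  set fiber := fun c => {a ∈ F | rep a = c}
  have hpairs : #{p ∈ F ×ˢ F | p.1 < p.2 ∧ rep p.1 = rep p.2} =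
      ∑ c ∈ F.image rep, #{p ∈ fiber c ×ˢ fiber c | p.1 < p.2} := by
    rw [card_eq_sum_card_fiberwise (f := fun p => rep p.1) fun p hp => ?_]
    · refine sum_congr rfl fun c _ => congrArg card ?_
      ext ⟨a, b⟩
      simp only [fiber, mem_filter, mem_product]
      constructor
      · rintro ⟨⟨⟨ha, hb⟩, hab, hr⟩, rfl⟩
        exact ⟨⟨⟨ha, rfl⟩, hb, hr.symm⟩, hab⟩
      · rintro ⟨⟨⟨ha, rfl⟩, hb, hr⟩, hab⟩
        exact ⟨⟨⟨ha, hb⟩, hab, hr.symm⟩, rfl⟩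
    · simp only [coe_filter, mem_product] at hp
      exact mem_image_of_mem rep hp.1.1
  have hchain : ∀ c, IsChain (· ≤ ·) (fiber c : Set β) := by
    intro c a ha b hb _
    simp only [fiber, mem_coe, mem_filter] at ha hb
    exact hrep a b (ha.2.trans hb.2.symm)
  calc #F = ∑ c ∈ F.image rep, #(fiber c) := card_eq_sum_card_image rep F
    _ ≤ ∑ c ∈ F.image rep, (#{p ∈ fiber c ×ˢ fiber c | p.1 < p.2} + 1) :=
      sum_le_sum fun c _ => (hchain c).card_le_card_pairs_lt_add_one
    _ = _ := by rw [sum_add_distrib, hpairs, sum_const, smul_eq_mul, mul_one, add_comm]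

end ChainFibers

theorem HasChainFibers.eq_of_card_eq {α β : Type*} {rep : Finset α → β}
    (hrep : HasChainFibers rep) {A B : Finset α} (h : rep A = rep B) (hcard : #A = #B) : A = B :=
  (hrep A B h).elim (eq_of_subset_of_card_le · hcard.ge)
    fun h' => (eq_of_subset_of_card_le h' hcard.le).symm

theorem HasChainFibers.card_pairs_le_choose {α β : Type*} [Fintype α] [DecidableEq β]
    {rep : Finset α → β} (hrep : HasChainFibers rep) (a b : ℕ) :
    #{p ∈ powersetCard a univ ×ˢ powersetCard b univ | rep p.1 = rep p.2} ≤
        (Fintype.card α).choose a ∧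
      #{p ∈ powersetCard a univ ×ˢ powersetCard b univ | rep p.1 = rep p.2} ≤
        (Fintype.card α).choose b := by
  rw [← card_univ (α := α), ← card_powersetCard, ← card_powersetCard]
  constructor
  · refine card_le_card_of_injOn Prod.fst (fun p hp => ?_) fun p hp q hq h => ?_
    · simp_all
    · simp only [coe_filter, mem_product, mem_powersetCard_univ] at hp hq
      exact Prod.ext h (hrep.eq_of_card_eq (hp.2.symm.trans (h ▸ hq.2)) (hp.1.2.trans hq.1.2.symm))
  · refine card_le_card_of_injOn Prod.snd (fun p hp => ?_) fun p hp q hq h => ?_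
    · simp_all
    · simp only [coe_filter, mem_product, mem_powersetCard_univ] at hp hq
      exact Prod.ext (hrep.eq_of_card_eq (hp.2.trans (h ▸ hq.2.symm)) (hp.1.1.trans hq.1.1.symm)) h

section Descent
variable {α : Type*} {g : Finset α → Finset α} {k : ℕ} {A B : Finset α}

def descend (g : Finset α → Finset α) (k : ℕ) (A : Finset α) : Finset α := g^[#A - k] A

theorem subset_and_card_iterate_of_covBy (hcov : ∀ A, k < #A → g A ⋖ A) :
    ∀ j (A : Finset α), k + j ≤ #A → g^[j] A ⊆ A ∧ #(g^[j] A) + j = #A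
  | 0, A, _ => by simp
  | j + 1, A, hj => by
    obtain ⟨hsub, hcard⟩ := subset_and_card_iterate_of_covBy hcov j A (by omega)
    have hcovA := hcov _ (show k < #(g^[j] A) by omega)
    rw [Function.iterate_succ_apply']
    exact ⟨hcovA.le.trans hsub, by have := Nat.covBy_iff_add_one_eq.1 hcovA.card_finset; omega⟩

theorem eq_of_iterate_eq_of_covBy (hcov : ∀ A, k < #A → g A ⋖ A)
    (hinj : ∀ A B, k < #A → #A = #B → g A = g B → A = B) :
    ∀ j (A B : Finset α), k + j ≤ #A → #A = #B → g^[j] A = g^[j] B → A = B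
  | 0, A, B, _, _, h => h
  | j + 1, A, B, hj, hAB, h => by
    have hA := Nat.covBy_iff_add_one_eq.1 (hcov A (by omega)).card_finset
    have hB := Nat.covBy_iff_add_one_eq.1 (hcov B (by omega)).card_finset
    rw [Function.iterate_succ_apply, Function.iterate_succ_apply] at h
    exact hinj A B (by omega) hAB
      (eq_of_iterate_eq_of_covBy hcov hinj j _ _ (by omega) (by omega) h)

theorem descend_subset (hcov : ∀ A, k < #A → g A ⋖ A) (hA : k ≤ #A) : descend g k A ⊆ A :=
  (subset_and_card_iterate_of_covBy hcov _ A (by omega)).1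

theorem card_descend (hcov : ∀ A, k < #A → g A ⋖ A) (hA : k ≤ #A) : #(descend g k A) = k := by
  have := (subset_and_card_iterate_of_covBy hcov (#A - k) A (by omega)).2
  rw [descend]
  omega

theorem subset_of_descend_eq (hcov : ∀ A, k < #A → g A ⋖ A)
    (hinj : ∀ A B, k < #A → #A = #B → g A = g B → A = B) (hA : k ≤ #A) (hAB : #A ≤ #B)
    (h : descend g k A = descend g k B) : A ⊆ B := by
  obtain ⟨hsub, hcard⟩ := subset_and_card_iterate_of_covBy hcov (#B - #A) B (by omega)
  have hsplit : descend g k B = g^[#A - k] (g^[#B - #A] B) := by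
    rw [descend, ← Function.iterate_add_apply]
    congr 1
    omega
  rw [descend, hsplit] at h
  rwa [eq_of_iterate_eq_of_covBy hcov hinj _ A _ (by omega) (by omega) h]

theorem subset_or_subset_of_descend_eq (hcov : ∀ A, k < #A → g A ⋖ A)
    (hinj : ∀ A B, k < #A → #A = #B → g A = g B → A = B) (hA : k ≤ #A) (hB : k ≤ #B)
    (h : descend g k A = descend g k B) : A ⊆ B ∨ B ⊆ A :=
  (le_total #A #B).imp (subset_of_descend_eq hcov hinj hA · h)
    (subset_of_descend_eq hcov hinj hB · h.symm)

end Descent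

section ChainDecomposition
variable {α : Type*} [DecidableEq α] [Fintype α]

theorem exists_covBy_injOn_of_card_lt_two_mul {r : ℕ} (hr : Fintype.card α < 2 * r) :
    ∃ g : Finset α → Finset α, (∀ A, #A = r → g A ⋖ A) ∧ Set.InjOn g {A | #A = r} := by
  have hall : ∀ s : Finset {A : Finset α // #A = r},
      #s ≤ #(s.biUnion fun A => A.1.image A.1.erase) := by
    intro s
    set 𝒜 := s.map (Function.Embedding.subtype _)
    have hsized : (𝒜 : Set (Finset α)).Sized r := by
      intro A hA
      obtain ⟨A, _, rfl⟩ := mem_map.1 hA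
      exact A.2
    have hshadow : ∂ 𝒜 = s.biUnion fun A => A.1.image A.1.erase := by
      simp only [𝒜, shadow, sup_eq_biUnion, map_eq_image, image_biUnion]
      rfl
    have hLYM := card_mul_le_card_shadow_mul hsized
    rw [card_map, hshadow] at hLYM
    exact Nat.le_of_mul_le_mul_right (hLYM.trans (Nat.mul_le_mul_left _ (by omega))) (by omega)
  obtain ⟨f, hf_inj, hf⟩ := (all_card_le_biUnion_card_iff_exists_injective _).1 hall
  refine ⟨fun A => if h : #A = r then f ⟨A, h⟩ else A, fun A hA => ?_, fun A hA B hB h => ?_⟩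
  · obtain ⟨a, ha, he⟩ := mem_image.1 (hf ⟨A, hA⟩)
    simp only [dif_pos hA, ← he]
    exact erase_covBy ha
  · simp only [dif_pos (show #A = r from hA), dif_pos (show #B = r from hB)] at h
    exact congrArg Subtype.val (hf_inj h)

theorem exists_covBy_of_card_lt_two_mul_card :
    ∃ g : Finset α → Finset α, (∀ A, Fintype.card α < 2 * #A → g A ⋖ A) ∧
      ∀ A B, Fintype.card α < 2 * #A → #A = #B → g A = g B → A = B := by
  have hlevel : ∀ r, ∃ g : Finset α → Finset α, Fintype.card α < 2 * r →
      (∀ A, #A = r → g A ⋖ A) ∧ Set.InjOn g {A | #A = r} := fun r => by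
    by_cases hr : Fintype.card α < 2 * r
    · obtain ⟨g, hg⟩ := exists_covBy_injOn_of_card_lt_two_mul hr
      exact ⟨g, fun _ => hg⟩
    · exact ⟨id, fun h => (hr h).elim⟩
  choose G hG using hlevel
  exact ⟨fun A => G #A A, fun A hA => (hG _ hA).1 A rfl,
    fun A B hA hAB h => (hG _ hA).2 rfl hAB.symm (by simpa only [hAB] using h)⟩

theorem exists_chain_decomposition :
    ∃ rep : Finset α → Finset α, (∀ A, #(rep A) = Fintype.card α / 2) ∧ HasChainFibers rep := by
  obtain ⟨g, hcov, hinj⟩ := exists_covBy_of_card_lt_two_mul_card (α := α)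
  set n := Fintype.card α
  set m := n / 2
  have hcov_m : ∀ A, m < #A → g A ⋖ A := fun A hA => hcov A (by omega)
  have hinj_m : ∀ A B, m < #A → #A = #B → g A = g B → A = B := fun A B hA => hinj A B (by omega)
  have hcov_m' : ∀ A, n - m < #A → g A ⋖ A := fun A hA => hcov A (by omega)
  have hinj_m' : ∀ A B, n - m < #A → #A = #B → g A = g B → A = B :=
    fun A B hA => hinj A B (by omega)
  have hcompl : ∀ A : Finset α, #A < m → n - m ≤ #Aᶜ := fun A hA => by
    rw [card_compl]; omega
  refine ⟨fun A => if m ≤ #A then descend g m A else (descend g (n - m) Aᶜ)ᶜ, fun A => ?_,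
    fun A B h => ?_⟩
  · dsimp only
    split_ifs with hA
    · exact card_descend hcov_m hA
    · rw [card_compl, card_descend hcov_m' (hcompl A (by omega))]
      omega
  · have hup : ∀ A, #A < m → A ⊆ (descend g (n - m) Aᶜ)ᶜ := fun A hA =>
      subset_compl_comm.1 (descend_subset hcov_m' (hcompl A hA))
    dsimp only at h
    split_ifs at h with hA hB hB
    · exact subset_or_subset_of_descend_eq hcov_m hinj_m hA hB h
    · exact Or.inr ((hup B (by omega)).trans (h ▸ descend_subset hcov_m hA))
    · exact Or.inl ((hup A (by omega)).trans (h ▸ descend_subset hcov_m hB))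
    · exact (subset_or_subset_of_descend_eq hcov_m' hinj_m' (hcompl A (by omega))
        (hcompl B (by omega)) (compl_injective h)).symm.imp
        compl_subset_compl.1 compl_subset_compl.1

end ChainDecomposition

theorem Equiv.Perm.smul_finset_eq_self_iff {α : Type*} [DecidableEq α] (σ : Equiv.Perm α)
    (A : Finset α) : σ • A = A ↔ ∀ x, σ x ∈ A ↔ x ∈ A := by
  refine ⟨fun h x => by nth_rw 1 [← h]; exact smul_mem_smul_finset_iff σ, fun h => ?_⟩
  refine eq_of_subset_of_card_le (fun y hy => ?_) (card_smul_finset σ A).ge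
  obtain ⟨x, hx, rfl⟩ := mem_smul_finset.1 hy
  exact (h x).2 hx

section PermCount
variable {α : Type*} [DecidableEq α] [Fintype α]

theorem card_perm_smul_eq_le_card_stabilizer (A B A' B' : Finset α) :
    #{σ : Equiv.Perm α | σ • A = A' ∧ σ • B = B'} ≤
      #{σ : Equiv.Perm α | σ • A = A ∧ σ • B = B} := by
  obtain h | ⟨σ₀, hσ₀⟩ := eq_empty_or_nonempty {σ : Equiv.Perm α | σ • A = A' ∧ σ • B = B'}
  · simp [h]
  obtain ⟨hA, hB⟩ := (mem_filter.1 hσ₀).2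
  refine card_le_card_of_injOn (σ₀⁻¹ * ·) (fun σ hσ => ?_) fun σ _ τ _ h => mul_left_cancel h
  obtain ⟨hσA, hσB⟩ := (mem_filter.1 hσ).2
  simp only [coe_filter, mem_univ, true_and, Set.mem_ofPred_eq, mul_smul, hσA, hσB,
    inv_smul_eq_iff, hA, hB]

theorem card_perm_smul_eq_self_of_subset {A B : Finset α} (hAB : A ⊆ B) :
    #{σ : Equiv.Perm α | σ • A = A ∧ σ • B = B} =
      (#A)! * (#B - #A)! * (Fintype.card α - #B)! := by
  set f : α → Bool × Bool := fun x => (decide (x ∈ A), decide (x ∈ B))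
  have hstab : ∀ σ : Equiv.Perm α, σ • A = A ∧ σ • B = B ↔ f ∘ σ = f := fun σ => by
    simp only [Equiv.Perm.smul_finset_eq_self_iff, funext_iff, Function.comp_apply, f,
      Prod.mk.injEq, decide_eq_decide, forall_and]
  have := DomMulAct.stabilizer_card f
  simp only [Fintype.card_subtype, ← hstab] at this
  rw [this]
  have h₁ : ({x | x ∈ A ∧ x ∈ B} : Finset α) = A := by ext; simpa using fun h => hAB h
  have h₂ : ({x | x ∈ A ∧ x ∉ B} : Finset α) = ∅ := by ext; simpa using fun h => hAB h
  have h₃ : ({x | x ∉ A ∧ x ∈ B} : Finset α) = B \ A := by ext; simp [and_comm]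
  have h₄ : ({x | x ∉ A ∧ x ∉ B} : Finset α) = Bᶜ := by ext; simpa using fun h _ => h (hAB ‹_›)
  simp only [Fintype.prod_prod_type, Fintype.prod_bool, f, Prod.mk.injEq, decide_eq_true_eq,
    decide_eq_false_iff_not, h₁, h₂, h₃, h₄, card_sdiff_of_subset hAB, card_compl, card_empty,
    Nat.factorial_zero]
  ring

theorem card_perm_smul_rep_eq_le {β : Type*} [DecidableEq β] (rep : Finset α → β)
    {A B : Finset α} (hAB : A ⊆ B) :
    #{σ : Equiv.Perm α | rep (σ • A) = rep (σ • B)} ≤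
      (#A)! * (#B - #A)! * (Fintype.card α - #B)! *
        #{p ∈ powersetCard #A univ ×ˢ powersetCard #B univ | rep p.1 = rep p.2} := by
  rw [← card_perm_smul_eq_self_of_subset hAB]
  refine (card_le_mul_card_image (f := fun σ : Equiv.Perm α => (σ • A, σ • B)) _
    #{σ : Equiv.Perm α | σ • A = A ∧ σ • B = B} fun p _ => ?_).trans ?_
  · refine (card_le_card fun σ hσ => ?_).trans (card_perm_smul_eq_le_card_stabilizer A B p.1 p.2)
    simp only [mem_filter, mem_univ, true_and] at hσ ⊢
    rw [← hσ.2]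
    exact ⟨rfl, rfl⟩
  · gcongr
    intro p hp
    obtain ⟨σ, hσ, rfl⟩ := mem_image.1 hp
    simp only [mem_filter, mem_univ, true_and] at hσ
    simp [hσ, card_smul_finset]

theorem HasChainFibers.half_add_one_mul_card_perm_le {β : Type*} [DecidableEq β]
    {rep : Finset α → β} (hrep : HasChainFibers rep) {A B : Finset α} (hAB : A ⊂ B)
    (hne : ¬(A = ∅ ∧ B = univ)) :
    (Fintype.card α / 2 + 1) * #{σ : Equiv.Perm α | rep (σ • A) = rep (σ • B)} ≤
      (Fintype.card α)! := by
  set n := Fintype.card α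
  set a := #A
  set b := #B
  have hab : a < b := card_lt_card hAB
  have hbn : b ≤ n := card_le_univ B
  obtain ⟨hDa, hDb⟩ := hrep.card_pairs_le_choose a b
  have hcount := card_perm_smul_rep_eq_le rep hAB.subset
  have hfact := Nat.factorial_eq_choose_mul_choose_mul hab.le hbn
  -- `n! = C(n,a) C(n-a,b-a) a! (b-a)! (n-b)! = C(n,b) C(b,a) a! (b-a)! (n-b)!` while the count is
  -- at most `a! (b-a)! (n-b)!` times `C(n,a)` and times `C(n,b)`: it suffices that `C(n-a,b-a)`
  -- (when `a + b ≤ n`) resp. `C(b,a)` (when `a + b > n`) is at least `n/2 + 1`.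
  rcases le_or_gt (a + b) n with hsum | hsum
  · have hbn' : b < n := by
      refine lt_of_le_of_ne hbn fun h => hne ⟨card_eq_zero.1 (by omega), ?_⟩
      exact (card_eq_iff_eq_univ B).1 h
    have hc : n / 2 + 1 ≤ (n - a).choose (b - a) :=
      (show n / 2 + 1 ≤ n - a by omega).trans
        (Nat.self_le_choose_of_pos_of_lt (by omega) (by omega))
    calc (n / 2 + 1) * _ ≤ (n - a).choose (b - a) * (a ! * (b - a)! * (n - b)! * n.choose a) := by
          gcongr
          exact hcount.trans (by gcongr)
      _ = n ! := by rw [← hfact]; ring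
  · have hc : n / 2 + 1 ≤ b.choose a :=
      (show n / 2 + 1 ≤ b by omega).trans (Nat.self_le_choose_of_pos_of_lt (by omega) hab)
    calc (n / 2 + 1) * _ ≤ b.choose a * (a ! * (b - a)! * (n - b)! * n.choose b) := by
          gcongr
          exact hcount.trans (by gcongr)
      _ = n ! := by rw [← hfact, ← Nat.choose_mul hab.le]; ring

end PermCount

theorem card_pairs_erase_top_add_card_le {β : Type*} [PartialOrder β] [OrderTop β] [DecidableEq β]
    [DecidableLT β] {F : Finset β} (htop : ⊤ ∈ F) :
    #{p ∈ F.erase ⊤ ×ˢ F.erase ⊤ | p.1 < p.2} + #(F.erase ⊤) ≤ #{p ∈ F ×ˢ F | p.1 < p.2} := by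
  rw [← card_image_of_injective (F.erase ⊤) (fun _ _ h => congrArg Prod.fst h :
    Function.Injective fun a : β => (a, (⊤ : β))), ← card_union_of_disjoint]
  · refine card_le_card (union_subset (fun p hp => ?_) fun p hp => ?_)
    · simp only [mem_filter, mem_product] at hp ⊢
      exact ⟨⟨mem_of_mem_erase hp.1.1, mem_of_mem_erase hp.1.2⟩, hp.2⟩
    · obtain ⟨a, ha, rfl⟩ := mem_image.1 hp
      simp only [mem_filter, mem_product]
      exact ⟨⟨mem_of_mem_erase ha, htop⟩, lt_top_iff_ne_top.2 (ne_of_mem_erase ha)⟩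
  · refine disjoint_left.2 fun p hp hp' => ?_
    obtain ⟨a, _, rfl⟩ := mem_image.1 hp'
    simp at hp

section Averaging
variable {α : Type*} [DecidableEq α] [Fintype α]

theorem card_mul_le_card_ssubset_pairs_of_univ_notMem {x : ℕ} {F : Finset (Finset α)}
    (hu : univ ∉ F) (hF : #F = x + (Fintype.card α).choose (Fintype.card α / 2)) :
    x * (Fintype.card α / 2 + 1) ≤ #{p ∈ F ×ˢ F | p.1 ⊂ p.2} := by
  obtain ⟨rep, hcard, hrep⟩ := exists_chain_decomposition (α := α)
  set n := Fintype.card α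
  set P := {p ∈ F ×ˢ F | p.1 ⊂ p.2}
  set r : Equiv.Perm α → Finset α × Finset α → Prop := fun σ p => rep (σ • p.1) = rep (σ • p.2)
  have habove : ∀ σ, x ≤ #(P.bipartiteAbove r σ) := fun σ => by
    have hσ : HasChainFibers fun A => rep (σ • A) := fun A B h =>
      (hrep _ _ h).imp smul_finset_subset_smul_finset_iff.1 smul_finset_subset_smul_finset_iff.1
    have himage : #(F.image fun A => rep (σ • A)) ≤ n.choose (n / 2) := by
      calc _ ≤ #(powersetCard (n / 2) (univ : Finset α)) := card_le_card fun _ hR => by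
            obtain ⟨A, _, rfl⟩ := mem_image.1 hR
            exact mem_powersetCard_univ.2 (hcard _)
        _ = n.choose (n / 2) := by rw [card_powersetCard, card_univ]
    have := hσ.card_le_card_image_add_card_pairs F
    rw [bipartiteAbove, filter_filter]
    simp only [r]
    omega
  have hbelow : ∀ p ∈ P, (n / 2 + 1) * #(univ.bipartiteBelow r p) ≤ n ! := fun p hp => by
    simp only [P, mem_filter, mem_product] at hp
    exact hrep.half_add_one_mul_card_perm_le hp.2 fun h => hu (h.2 ▸ hp.1.2)
  refine Nat.le_of_mul_le_mul_left ?_ (Nat.factorial_pos n)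
  calc n ! * (x * (n / 2 + 1)) = (n / 2 + 1) * ∑ _σ : Equiv.Perm α, x := by
        rw [sum_const, card_univ, Fintype.card_perm, smul_eq_mul]; ring
    _ ≤ (n / 2 + 1) * ∑ σ, #(P.bipartiteAbove r σ) := by gcongr with σ; exact habove σ
    _ = ∑ p ∈ P, (n / 2 + 1) * #(univ.bipartiteBelow r p) := by
        rw [sum_card_bipartiteAbove_eq_sum_card_bipartiteBelow, mul_sum]
    _ ≤ ∑ _p ∈ P, n ! := sum_le_sum hbelow
    _ = n ! * #P := by rw [sum_const, smul_eq_mul, mul_comm]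

end Averaging

/-- Supersaturation extension of Sperner's theorem (case k = 2). -/
theorem supersaturation_pairs (n x : ℕ) (F : Finset (Finset (Fin n)))
    (hF : F.card = x + n.choose (n / 2)) :
    x * (n / 2 + 1) ≤ ((F ×ˢ F).filter fun p => p.1 ⊂ p.2).card := by
  by_cases hu : (⊤ : Finset (Fin n)) ∈ F
  · obtain _ | y := x
    · simp
    have hmid : n / 2 + 1 ≤ n.choose (n / 2) := by
      rcases Nat.eq_zero_or_pos (n / 2) with h | h
      · simp [h]
      · exact (show n / 2 + 1 ≤ n by omega).trans (Nat.self_le_choose_of_pos_of_lt h (by omega))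
    have hF' : #(F.erase ⊤) = y + n.choose (n / 2) := by rw [card_erase_of_mem hu]; omega
    have h₁ := card_mul_le_card_ssubset_pairs_of_univ_notMem (notMem_erase ⊤ F) (by simpa using hF')
    have h₂ := card_pairs_erase_top_add_card_le hu
    simp only [Fintype.card_fin] at h₁
    rw [add_one_mul]
    omega
  · simpa using card_mul_le_card_ssubset_pairs_of_univ_notMem hu (by simpa using hF)
end

section
/- Fix a symmetric chain decomposition C of 2^[n] and a chain A_1 ⊊ A_2 ⊊ ... ⊊ A_k of subsets of [n] with |A_i| = a_i. The number of permutations π of [n] such that all of A_1,...,A_k lie on a single chain of the SCD π(C) equals a_1! · (a_2 - a_1)! · ... · (a_k - a_{k-1})! · (n - a_k)! · min{ C(n,a_1), C(n,a_k) }. -/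
def IsSymChain (n : ℕ) (C : Finset (Finset (Fin n))) : Prop :=
  IsChain (· ⊆ ·) (C : Set (Finset (Fin n))) ∧
    ∃ k, k ≤ n / 2 ∧ C.image Finset.card = Finset.Icc k (n - k)

/-!
A permutation `π` is counted exactly when `π⁻¹` carries `A 0 ⊂ ⋯ ⊂ A (k-1)` onto sets of the
same sizes in one chain `C` of `𝒞`; as a chain has at most one member of each size, `C` is unique
and the images are determined by `C`. The sizes of a symmetric chain form an interval
`[j, n - j]`, so `C` qualifies iff it meets the sizes `a₀ = #(A 0)` and `a = #(A (k-1))`, i.e. iff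
it meets the size `min a₀ (n - a)`; there are `n.choose (min a₀ (n - a))
= min (n.choose a₀) (n.choose a)` such chains. For each of them, the permutations carrying its flag
`D` onto `A` are those transporting the level function `x ↦ min {i | x ∈ D i}` of `D` to that of
`A`: a coset of the stabiliser of a function whose fibres have sizes
`a₀, #(A 1) - a₀, …, n - a`.
-/

open Finset Nat

theorem card_perm_comp_eq {α ι : Type*} [Fintype α] [DecidableEq α] [Fintype ι] [DecidableEq ι]
    {f g : α → ι} (h : ∀ i, Fintype.card {a // f a = i} = Fintype.card {a // g a = i}) :
    Fintype.card {π : Equiv.Perm α // g ∘ π = f} = ∏ i, (Fintype.card {a // g a = i})! := by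
  let e : Equiv.Perm α := Equiv.ofFiberEquiv fun i => Fintype.equivOfCardEq (h i)
  have he : g ∘ e = f := funext (Equiv.ofFiberEquiv_map _)
  simp_rw [← h]
  rw [← DomMulAct.stabilizer_card f]
  refine Fintype.card_congr (Equiv.subtypeEquiv (Equiv.mulLeft e⁻¹) fun π => ?_)
  have : f ∘ ⇑(e⁻¹ * π) = g ∘ π := by rw [← he]; ext x; simp
  rw [Equiv.coe_mulLeft, this]

section Flag
variable {α : Type*} [DecidableEq α] {k : ℕ} {A B : ℕ → Finset α}

/-- The least `i < k` with `x ∈ B i` when `B` is monotone, and `k` if there is none. -/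
def flagLevel (k : ℕ) (B : ℕ → Finset α) (x : α) : Fin (k + 1) :=
  ⟨#{i ∈ range k | x ∉ B i}, Nat.lt_succ_of_le ((card_filter_le _ _).trans_eq (card_range k))⟩

lemma coe_flagLevel (x : α) : (flagLevel k B x : ℕ) = #{i ∈ range k | x ∉ B i} := rfl

lemma flagLevel_le_iff (hB : MonotoneOn B (Set.Iio k)) {i : ℕ} (hi : i < k) (x : α) :
    (flagLevel k B x : ℕ) ≤ i ↔ x ∈ B i := by
  rw [coe_flagLevel]
  constructor
  · intro hle
    by_contra hx
    have : range (i + 1) ⊆ {j ∈ range k | x ∉ B j} := fun j hj => by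
      have hji : j ≤ i := Nat.lt_succ_iff.mp (mem_range.mp hj)
      exact mem_filter.mpr
        ⟨mem_range.mpr (by omega), fun hxj => hx (hB (hji.trans_lt hi) hi hji hxj)⟩
    have := card_le_card this
    rw [card_range] at this
    omega
  · intro hx
    have : {j ∈ range k | x ∉ B j} ⊆ range i := fun j hj => by
      rw [mem_filter, mem_range] at hj
      exact mem_range.mpr (lt_of_not_ge fun hij => hj.2 (hB hi hj.1 hij hx))
    simpa using card_le_card this

lemma flagLevel_comp_eq_iff (hB : MonotoneOn B (Set.Iio k)) (hA : MonotoneOn A (Set.Iio k))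
    (π : Equiv.Perm α) : flagLevel k A ∘ π = flagLevel k B ↔ ∀ i < k, (B i).image π = A i := by
  constructor
  · intro h i hi
    ext y
    obtain ⟨x, rfl⟩ := π.surjective y
    rw [π.injective.mem_finset_image, ← flagLevel_le_iff hB hi, ← flagLevel_le_iff hA hi, ← h,
      Function.comp_apply]
  · intro h
    funext x
    apply Fin.ext
    simp only [Function.comp_apply, coe_flagLevel]
    congr 1
    refine filter_congr fun i hi => ?_
    rw [← h i (mem_range.mp hi), π.injective.mem_finset_image]

variable [Fintype α]

lemma card_flagLevel_eq_zero (hB : MonotoneOn B (Set.Iio k)) (hk : 0 < k) :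
    #{x | (flagLevel k B x : ℕ) = 0} = #(B 0) := by
  congr 1
  ext x
  rw [mem_filter, ← flagLevel_le_iff hB hk, Nat.le_zero]
  simp

lemma card_flagLevel_eq_succ (hB : MonotoneOn B (Set.Iio k)) {j : ℕ} (hj : j + 1 < k) :
    #{x | (flagLevel k B x : ℕ) = j + 1} = #(B (j + 1)) - #(B j) := by
  have hj' : j < k := by omega
  rw [← card_sdiff_of_subset (hB hj' hj (Nat.le_succ j))]
  congr 1
  ext x
  simp only [mem_filter, mem_univ, true_and, mem_sdiff, ← flagLevel_le_iff hB hj,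
    ← flagLevel_le_iff hB hj']
  omega

lemma card_flagLevel_eq_last (hB : MonotoneOn B (Set.Iio k)) (hk : 0 < k) :
    #{x | (flagLevel k B x : ℕ) = k} = Fintype.card α - #(B (k - 1)) := by
  rw [← card_compl]
  congr 1
  ext x
  simp only [mem_filter, mem_univ, true_and, mem_compl,
    ← flagLevel_le_iff hB (Nat.sub_one_lt_of_lt hk)]
  have := (flagLevel k B x).isLt
  omega

lemma card_flagLevel_fiber_eq (hk : 0 < k) (hB : MonotoneOn B (Set.Iio k))
    (hA : MonotoneOn A (Set.Iio k)) (hcard : ∀ i < k, #(B i) = #(A i)) (i : Fin (k + 1)) :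
    Fintype.card {x // flagLevel k B x = i} = Fintype.card {x // flagLevel k A x = i} := by
  simp only [Fintype.card_subtype, Fin.ext_iff]
  obtain ⟨_ | j, hi⟩ := i
  · rw [card_flagLevel_eq_zero hB hk, card_flagLevel_eq_zero hA hk, hcard 0 hk]
  obtain hj | rfl := Nat.lt_or_eq_of_le (Nat.lt_succ_iff.mp hi)
  · rw [card_flagLevel_eq_succ hB hj, card_flagLevel_eq_succ hA hj, hcard _ hj,
      hcard j (by omega)]
  · rw [card_flagLevel_eq_last hB hk, card_flagLevel_eq_last hA hk, hcard _ (by omega)]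

theorem card_perm_image_flag_eq (hk : 0 < k) (hB : MonotoneOn B (Set.Iio k))
    (hA : MonotoneOn A (Set.Iio k)) (hcard : ∀ i < k, #(B i) = #(A i)) :
    #{π : Equiv.Perm α | ∀ i < k, (B i).image π = A i} =
      (#(A 0))! * (∏ i ∈ range (k - 1), (#(A (i + 1)) - #(A i))!) *
        (Fintype.card α - #(A (k - 1)))! := by
  simp_rw [← flagLevel_comp_eq_iff hB hA]
  rw [← Fintype.card_subtype, card_perm_comp_eq (card_flagLevel_fiber_eq hk hB hA hcard)]
  simp only [Fintype.card_subtype, Fin.ext_iff]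
  rw [Fin.prod_univ_eq_prod_range (fun j => (#{x | (flagLevel k A x : ℕ) = j})!)]
  obtain ⟨m, rfl⟩ : ∃ m, k = m + 1 := ⟨k - 1, by omega⟩
  rw [prod_range_succ', prod_range_succ, card_flagLevel_eq_zero hA hk,
    card_flagLevel_eq_last hA hk, Nat.add_sub_cancel,
    prod_congr rfl fun j hj =>
      by rw [card_flagLevel_eq_succ hA (Nat.succ_lt_succ (mem_range.mp hj))]]
  ring

end Flag

theorem Nat.choose_le_choose_of_le_of_le_half_s6 {n r s : ℕ} (hrs : r ≤ s) (hs : s ≤ n / 2) :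
    n.choose r ≤ n.choose s := by
  induction s, hrs using Nat.le_induction with
  | base => rfl
  | succ s _ ih => exact (ih (by omega)).trans (choose_le_succ_of_lt_half_left (by omega))

theorem Nat.choose_le_choose_of_le_of_le_sub {n r s : ℕ} (hrs : r ≤ s) (hs : s ≤ n - r) :
    n.choose r ≤ n.choose s := by
  rcases le_or_gt s (n / 2) with h | h
  · exact choose_le_choose_of_le_of_le_half_s6 hrs h
  · rw [← choose_symm (show s ≤ n by omega)]
    exact choose_le_choose_of_le_of_le_half_s6 (by omega) (by omega)

theorem Nat.choose_min_sub_eq_min_choose {n a b : ℕ} (hab : a ≤ b) (hb : b ≤ n) :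
    n.choose (min a (n - b)) = min (n.choose a) (n.choose b) := by
  rcases le_total a (n - b) with h | h
  · rw [min_eq_left h, min_eq_left (choose_le_choose_of_le_of_le_sub hab (by omega))]
  · rw [min_eq_right h, min_eq_right, choose_symm hb]
    calc n.choose b = n.choose (n - b) := (choose_symm hb).symm
      _ ≤ n.choose a := choose_le_choose_of_le_of_le_sub h (by omega)

section Chain
variable {α : Type*} {C : Finset (Finset α)}

theorem IsChain.subset_of_card_le (hC : IsChain (· ⊆ ·) (C : Set (Finset α))) {S T : Finset α}
    (hS : S ∈ C) (hT : T ∈ C) (h : #S ≤ #T) : S ⊆ T := by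
  rcases eq_or_ne S T with rfl | hne
  · rfl
  rcases hC hS hT hne with hST | hTS
  · exact hST
  · exact (eq_of_subset_of_card_le hTS h).ge

theorem IsChain.eq_of_card_eq (hC : IsChain (· ⊆ ·) (C : Set (Finset α))) {S T : Finset α}
    (hS : S ∈ C) (hT : T ∈ C) (h : #S = #T) : S = T :=
  subset_antisymm (hC.subset_of_card_le hS hT h.le) (hC.subset_of_card_le hT hS h.ge)

variable [Fintype α] {𝒞 : Finset (Finset (Finset α))}

theorem card_filter_exists_card_eq (hpart : ∀ S : Finset α, ∃! C, C ∈ 𝒞 ∧ S ∈ C)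
    (hchain : ∀ C ∈ 𝒞, IsChain (· ⊆ ·) (C : Set (Finset α))) (s : ℕ) :
    #{C ∈ 𝒞 | ∃ S ∈ C, #S = s} = (Fintype.card α).choose s := by
  rw [← Finset.card_univ, ← card_powersetCard]
  let c : Finset α → Finset (Finset α) := fun S => (hpart S).exists.choose
  have hc : ∀ S, c S ∈ 𝒞 ∧ S ∈ c S := fun S => (hpart S).exists.choose_spec
  refine (card_nbij c (fun S hS => ?_) (fun S hS T hT hST => ?_) (fun C hC => ?_)).symm
  · exact mem_filter.mpr ⟨(hc S).1, S, (hc S).2, (mem_powersetCard_univ.mp hS)⟩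
  · have hT' : T ∈ c S := hST ▸ (hc T).2
    exact (hchain _ (hc S).1).eq_of_card_eq (hc S).2 hT'
      ((mem_powersetCard_univ.mp hS).trans (mem_powersetCard_univ.mp hT).symm)
  · obtain ⟨hC𝒞, S, hSC, hS⟩ := mem_filter.mp hC
    exact ⟨S, mem_powersetCard_univ.mpr hS, (hpart S).unique (hc S) ⟨hC𝒞, hSC⟩⟩

variable [DecidableEq α]

theorem card_perm_flag_mem_chain {k : ℕ} {A : ℕ → Finset α}
    (hC : IsChain (· ⊆ ·) (C : Set (Finset α))) (hk : 0 < k) (hA : MonotoneOn A (Set.Iio k))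
    (hsizes : ∀ i < k, ∃ S ∈ C, #S = #(A i)) :
    #{π : Equiv.Perm α | ∀ i < k, A i ∈ C.image (image π)} =
      (#(A 0))! * (∏ i ∈ range (k - 1), (#(A (i + 1)) - #(A i))!) *
        (Fintype.card α - #(A (k - 1)))! := by
  choose! D hDC hDcard using hsizes
  have hD : MonotoneOn D (Set.Iio k) := fun i hi j hj hij =>
    hC.subset_of_card_le (hDC i hi) (hDC j hj)
      (by rw [hDcard i hi, hDcard j hj]; exact card_le_card (hA hi hj hij))
  rw [← card_perm_image_flag_eq hk hD hA hDcard]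
  congr 1
  ext π
  simp only [mem_filter, mem_univ, true_and, mem_image]
  refine forall₂_congr fun i hi => ⟨fun ⟨S, hS, hSA⟩ => ?_, fun h => ⟨D i, hDC i hi, h⟩⟩
  rwa [hC.eq_of_card_eq (hDC i hi) hS
    (by rw [hDcard i hi, ← hSA, card_image_of_injective _ π.injective])]

theorem ncard_perm_exists_chain (hpart : ∀ S : Finset α, ∃! C, C ∈ 𝒞 ∧ S ∈ C) {k : ℕ}
    (hk : 0 < k) (A : ℕ → Finset α) :
    Set.ncard {π : Equiv.Perm α | ∃ C ∈ 𝒞, ∀ i < k, A i ∈ C.image (image π)} =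
      ∑ C ∈ 𝒞, #{π : Equiv.Perm α | ∀ i < k, A i ∈ C.image (image π)} := by
  rw [← card_biUnion, ← Set.ncard_coe_finset]
  · congr 1
    ext π
    simp
  · intro C hC C' hC' hne
    simp only [Function.onFun, disjoint_filter, mem_univ, true_implies]
    intro π h h'
    obtain ⟨S, hS, hSA⟩ := mem_image.mp (h 0 hk)
    obtain ⟨S', hS', hSA'⟩ := mem_image.mp (h' 0 hk)
    obtain rfl : S = S' := image_injective π.injective (hSA.trans hSA'.symm)
    exact hne ((hpart S).unique ⟨hC, hS⟩ ⟨hC', hS'⟩)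

end Chain

namespace IsSymChain
variable {n : ℕ} {C : Finset (Finset (Fin n))}

theorem exists_card_eq_iff (hC : IsSymChain n C) :
    ∃ j, ∀ s, (∃ S ∈ C, #S = s) ↔ j ≤ s ∧ s ≤ n - j := by
  obtain ⟨-, j, -, hj⟩ := hC
  exact ⟨j, fun s => by rw [← mem_Icc, ← hj, mem_image]⟩

theorem exists_card_eq_of_le_of_le (hC : IsSymChain n C) {a b s : ℕ} (ha : ∃ S ∈ C, #S = a)
    (hb : ∃ S ∈ C, #S = b) (has : a ≤ s) (hsb : s ≤ b) : ∃ S ∈ C, #S = s := by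
  obtain ⟨j, hj⟩ := hC.exists_card_eq_iff
  rw [hj] at ha hb ⊢
  omega

theorem exists_card_eq_and_iff (hC : IsSymChain n C) {a b : ℕ} (hab : a ≤ b) (hb : b ≤ n) :
    ((∃ S ∈ C, #S = a) ∧ ∃ S ∈ C, #S = b) ↔ ∃ S ∈ C, #S = min a (n - b) := by
  obtain ⟨j, hj⟩ := hC.exists_card_eq_iff
  simp only [hj]
  omega

theorem card_perm_flag_mem (hC : IsSymChain n C) {k : ℕ} (hk : 0 < k) {A : ℕ → Finset (Fin n)}
    (hA : MonotoneOn A (Set.Iio k)) :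
    #{π : Equiv.Perm (Fin n) | ∀ i < k, A i ∈ C.image (image π)} =
      if (∃ S ∈ C, #S = #(A 0)) ∧ ∃ S ∈ C, #S = #(A (k - 1)) then
        (#(A 0))! * (∏ i ∈ range (k - 1), (#(A (i + 1)) - #(A i))!) * (n - #(A (k - 1)))!
      else 0 := by
  split_ifs with h
  · have hlast : k - 1 ∈ Set.Iio k := Set.mem_Iio.mpr (by omega)
    rw [card_perm_flag_mem_chain hC.1 hk hA fun i hi => hC.exists_card_eq_of_le_of_le h.1 h.2
      (card_le_card (hA hk hi i.zero_le)) (card_le_card (hA hi hlast (by omega))),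
      Fintype.card_fin]
  · rw [Finset.card_eq_zero, filter_eq_empty_iff]
    intro π _ hπ
    have hsizes : ∀ i < k, ∃ S ∈ C, #S = #(A i) := fun i hi => by
      obtain ⟨S, hS, hSA⟩ := mem_image.mp (hπ i hi)
      exact ⟨S, hS, by rw [← hSA, card_image_of_injective _ π.injective]⟩
    exact h ⟨hsizes 0 hk, hsizes (k - 1) (by omega)⟩

end IsSymChain

theorem card_filter_exists_card_eq_and {n : ℕ} {𝒞 : Finset (Finset (Finset (Fin n)))}
    (hpart : ∀ S : Finset (Fin n), ∃! C, C ∈ 𝒞 ∧ S ∈ C) (hsym : ∀ C ∈ 𝒞, IsSymChain n C)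
    {a b : ℕ} (hab : a ≤ b) (hb : b ≤ n) :
    #{C ∈ 𝒞 | (∃ S ∈ C, #S = a) ∧ ∃ S ∈ C, #S = b} = min (n.choose a) (n.choose b) := by
  rw [filter_congr fun C hC => (hsym C hC).exists_card_eq_and_iff hab hb,
    card_filter_exists_card_eq hpart (fun C hC => (hsym C hC).1), Fintype.card_fin,
    Nat.choose_min_sub_eq_min_choose hab hb]

/-- Counting lemma N(n, A₁, …, A_k): the number of permutations π such that the chain
A₁ ⊊ ⋯ ⊊ A_k lies on a single chain of the SCD π(𝒞). -/
theorem counting_lemma (n k : ℕ) (hk : 1 ≤ k)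
    (𝒞 : Finset (Finset (Finset (Fin n))))
    (hpart : ∀ A : Finset (Fin n), ∃! C, C ∈ 𝒞 ∧ A ∈ C)
    (hsym : ∀ C ∈ 𝒞, IsSymChain n C)
    (A : ℕ → Finset (Fin n))
    (hA : ∀ i j, i < j → j < k → A i ⊂ A j) :
    Set.ncard {π : Equiv.Perm (Fin n) |
        ∃ C ∈ 𝒞, ∀ i < k, A i ∈ C.image (fun S => S.image π)} =
      (A 0).card.factorial *
        (∏ i ∈ Finset.range (k - 1), ((A (i + 1)).card - (A i).card).factorial) *
        (n - (A (k - 1)).card).factorial *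
        min (n.choose (A 0).card) (n.choose (A (k - 1)).card) := by
  have hAmono : MonotoneOn A (Set.Iio k) :=
    StrictMonoOn.monotoneOn fun i _ j hj hij => hA i j hij hj
  have hcard : #(A 0) ≤ #(A (k - 1)) :=
    card_le_card (hAmono hk (Set.mem_Iio.mpr (by omega)) (zero_le _))
  have hcard_le : #(A (k - 1)) ≤ n := (card_le_univ _).trans_eq (Fintype.card_fin n)
  rw [ncard_perm_exists_chain hpart hk,
    sum_congr rfl fun C hC => (hsym C hC).card_perm_flag_mem hk hAmono,
    sum_ite, sum_const_zero, add_zero, sum_const, smul_eq_mul,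
    card_filter_exists_card_eq_and hpart hsym hcard hcard_le, mul_comm]
end

section
/- If π and π' are distinct permutations of [n] and n ≥ 1, then applying π and π' elementwise to a fixed symmetric chain decomposition C of 2^[n] yields distinct symmetric chain decompositions π(C) ≠ π'(C). -/
lemma chain_card_eq {n : ℕ} {C : Finset (Finset (Fin n))}
    (hc : IsChain (· ⊆ ·) (C : Set (Finset (Fin n))))
    {B B' : Finset (Fin n)} (hB : B ∈ C) (hB' : B' ∈ C)
    (h : B.card = B'.card) : B = B' := by
  by_cases he : B = B'
  · exact he
  · rcases hc hB hB' he with h1 | h1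
    · exact Finset.eq_of_subset_of_card_le h1 h.ge
    · exact (Finset.eq_of_subset_of_card_le h1 h.le).symm

/-- The action of the symmetric group on SCDs obtained from a fixed SCD is free. -/
theorem scd_action_free (n : ℕ) (hn : 1 ≤ n)
    (𝒞 : Finset (Finset (Finset (Fin n))))
    (hpart : ∀ A : Finset (Fin n), ∃! C, C ∈ 𝒞 ∧ A ∈ C)
    (hsym : ∀ C ∈ 𝒞, IsSymChain n C)
    (π π' : Equiv.Perm (Fin n)) (hne : π ≠ π') :
    𝒞.image (fun C => C.image fun S => S.image π) ≠
      𝒞.image (fun C => C.image fun S => S.image π') := by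
  intro heq
  -- the chain containing univ
  obtain ⟨C₀, ⟨hC₀ : C₀ ∈ 𝒞, huniv : Finset.univ ∈ C₀⟩, huniq⟩ := hpart Finset.univ
  obtain ⟨hchain, k, hk, hcard⟩ := hsym C₀ hC₀
  -- k = 0
  have hn_mem : n ∈ C₀.image Finset.card := by
    exact Finset.mem_image.2 ⟨Finset.univ, huniv, by simp⟩
  rw [hcard, Finset.mem_Icc] at hn_mem
  have hk0 : k = 0 := by omega
  subst hk0
  simp only [Nat.sub_zero] at hcard
  -- function picking the element of card k
  set A : ℕ → Finset (Fin n) := fun k =>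
    if h : ∃ B ∈ C₀, B.card = k then h.choose else ∅ with hA_def
  have hA : ∀ k ≤ n, A k ∈ C₀ ∧ (A k).card = k := by
    intro k hkn
    have : k ∈ C₀.image Finset.card := by rw [hcard]; simp [hkn]
    obtain ⟨B, hB, hBc⟩ := Finset.mem_image.1 this
    have hex : ∃ B ∈ C₀, B.card = k := ⟨B, hB, hBc⟩
    simp only [hA_def, dif_pos hex]
    exact ⟨hex.choose_spec.1, hex.choose_spec.2⟩
  -- π(C₀) = π'(C₀)
  have hC₀eq : C₀.image (fun S => S.image π) = C₀.image (fun S => S.image π') := by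
    have h1 : C₀.image (fun S => S.image π) ∈
        𝒞.image (fun C => C.image fun S => S.image π') := by
      rw [← heq]; exact Finset.mem_image_of_mem _ hC₀
    obtain ⟨C₁, hC₁, hC₁eq⟩ := Finset.mem_image.1 h1
    have huniv1 : Finset.univ ∈ C₁.image (fun S => S.image π') := by
      rw [hC₁eq]
      exact Finset.mem_image.2 ⟨Finset.univ, huniv, Finset.image_univ_equiv π⟩
    obtain ⟨S, hS, hSeq⟩ := Finset.mem_image.1 huniv1
    have hScard : S = Finset.univ := by
      apply Finset.eq_univ_of_card
      have := congrArg Finset.card hSeq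
      rwa [Finset.card_image_of_injective _ π'.injective] at this
    have : C₁ = C₀ := huniq C₁ ⟨hC₁, hScard ▸ hS⟩
    rw [← hC₁eq, this]
  -- π(A k) = π'(A k)
  have hAeq : ∀ k ≤ n, (A k).image π = (A k).image π' := by
    intro k hkn
    obtain ⟨hAk, hAkc⟩ := hA k hkn
    have h1 : (A k).image π ∈ C₀.image (fun S => S.image π') := by
      rw [← hC₀eq]; exact Finset.mem_image_of_mem _ hAk
    obtain ⟨B, hB, hBeq⟩ := Finset.mem_image.1 h1
    have hBc : B.card = k := by
      have := congrArg Finset.card hBeq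
      rwa [Finset.card_image_of_injective _ π'.injective,
        Finset.card_image_of_injective _ π.injective, hAkc] at this
    have : B = A k := chain_card_eq hchain hB hAk (by rw [hBc, hAkc])
    rw [← hBeq, this]
  -- A (k) ⊆ A (k+1)
  have hAsub : ∀ k, k + 1 ≤ n → A k ⊆ A (k + 1) := by
    intro k hkn
    obtain ⟨hAk, hAkc⟩ := hA k (by omega)
    obtain ⟨hAk1, hAk1c⟩ := hA (k + 1) hkn
    have hne' : A k ≠ A (k + 1) := fun h => by rw [h, hAk1c] at hAkc; omega
    rcases hchain hAk hAk1 hne' with h | h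
    · exact h
    · exfalso
      have := Finset.card_le_card h
      omega
  -- by induction, π and π' agree on A k
  have hagree : ∀ k, k ≤ n → ∀ x ∈ A k, π x = π' x := by
    intro k
    induction k with
    | zero =>
      intro _ x hx
      have := (hA 0 (by omega)).2
      rw [Finset.card_eq_zero] at this
      rw [this] at hx
      exact absurd hx (Finset.notMem_empty x)
    | succ k ih =>
      intro hkn x hx
      by_cases hxk : x ∈ A k
      · exact ih (by omega) x hxk
      · -- x is the unique new element
        have h1 : π x ∈ (A (k+1)).image π' := by
          rw [← hAeq (k+1) hkn]; exact Finset.mem_image_of_mem _ hx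
        obtain ⟨z, hz, hzeq⟩ := Finset.mem_image.1 h1
        have hzk : z ∉ A k := by
          intro hzk
          have : π x ∈ (A k).image π' := hzeq ▸ Finset.mem_image_of_mem _ hzk
          rw [← hAeq k (by omega)] at this
          obtain ⟨y, hy, hyy⟩ := Finset.mem_image.1 this
          have : y = x := π.injective hyy
          exact hxk (this ▸ hy)
        -- A(k+1) \ A k is a singleton
        have hsub := hAsub k hkn
        have hcard1 : ((A (k+1)) \ A k).card = 1 := by
          rw [Finset.card_sdiff_of_subset hsub, (hA (k+1) hkn).2, (hA k (by omega)).2]; omega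
        obtain ⟨w, hw⟩ := Finset.card_eq_one.1 hcard1
        have hxw : x = w := by
          have : x ∈ A (k+1) \ A k := Finset.mem_sdiff.2 ⟨hx, hxk⟩
          rw [hw] at this; exact Finset.mem_singleton.1 this
        have hzw : z = w := by
          have : z ∈ A (k+1) \ A k := Finset.mem_sdiff.2 ⟨hz, hzk⟩
          rw [hw] at this; exact Finset.mem_singleton.1 this
        rw [← hzeq, hxw, hzw]
  -- A n = univ
  have hAn : A n = Finset.univ := by
    apply Finset.eq_univ_of_card
    rw [(hA n le_rfl).2]; simp
  exact hne (Equiv.ext fun x => hagree n le_rfl x (hAn ▸ Finset.mem_univ x))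
end
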